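/- arXiv:2304.13696 — 5 statements merged into one kernel-verified Lean document; each statement's English description precedes it below -/
import Mathlib

section
/- Let k ≥ 1, let q ∈ [0,1), let A, B be disjoint subsets of Z_k with |A| ≤ |B|, let f : A → B be an injection, and let σ be a linear order on A. Let ρ : Z_k → Z_k be the rotation ρ(x) = x + 1 (mod k), let ρσ be the linear order on ρ(A) with ρ(a) before ρ(a′) iff a is before a′ in σ, and let ρf : ρ(A) → ρ(B) be defined by (ρf)(ρ(a)) = ρ(f(a)). Then (1) wt_{ρσ}(ρ(A), ρ(B), ρf) = wt_σ(A,B,f), and (2) the projected word ω′ of (ρ(A), ρ(B), ρf) is the rotation of the projected word ω of (A,B,f): ω′_{ρ(b)} = ω_b for all b ∈ Z_k. -/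
open scoped Classical

noncomputable section

/-- `[r]_q = 1 + q + ... + q^(r-1)`, with `[0]_q = 0`. -/
def qa (q : ℝ) (r : ℕ) : ℝ := ∑ m ∈ Finset.range r, q ^ m

/-- The factor contributed by an element `a` of the first row that is linked to `b`
when the set of available elements of the second row is `D`: if `b` is the `m`-th
element of `D` in increasing order of cyclic distance `(· - a) mod k`
(the ring `Z_k` being identified with `{1, …, k}`) and `r = |D|`, the factor is
`q^(m-1) / [r]_q`. -/
def stepW (q : ℝ) (k a : ℕ) (D : Finset ℕ) (b : ℕ) : ℝ :=
  q ^ ((D.filter fun c => (c + k - a) % k < (b + k - a) % k).card) / qa q D.card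

/-- Product of the factors obtained by processing the elements of the first list
in order, starting with available set `D`; each processed `a` is linked to `F a`,
which then becomes unavailable. -/
def chainW (q : ℝ) (k : ℕ) (F : ℕ → ℕ) : List ℕ → Finset ℕ → ℝ
  | [], _ => 1
  | a :: l, D => stepW q k a D (F a) * chainW q k F l (D.erase (F a))

/-- The weight `wt(A, B, F)` of a linked two-row multiline queue on `Z_k = {1,…,k}`:
trivial links (elements of `A ∩ B`, linked to themselves) contribute a factor `1`;
the elements of `A \ B` are processed in increasing order, the initially available
elements of the second row being those of `B \ A`. -/
def mlqW (q : ℝ) (k : ℕ) (A B : Finset ℕ) (F : ℕ → ℕ) : ℝ :=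
  chainW q k F ((A \ B).sort (· ≤ ·)) (B \ A)

/-- Extend an injection `f : A ↪ B` to a function `ℕ → ℕ` (identity off `A`). -/
def extendF (A B : Finset ℕ) (f : ↥A ↪ ↥B) : ℕ → ℕ :=
  fun x => if h : x ∈ A then (f ⟨x, h⟩).1 else x

/-- Sum of the weights `wt(A, B, f)` over all two-row multiline queues `(A, B)` on
`Z_k = {1,…,k}` and all linkings `f` of `(A, B)` (injections `f : A → B` with
`f a = a` for all `a ∈ A ∩ B`) satisfying the condition `cond A B f`. -/
def mlqSum (q : ℝ) (k : ℕ)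
    (cond : Finset ℕ → Finset ℕ → (ℕ → ℕ) → Prop) : ℝ :=
  ∑ A ∈ (Finset.Icc 1 k).powerset, ∑ B ∈ (Finset.Icc 1 k).powerset,
    ∑ f : (↥A ↪ ↥B),
      if (∀ a ∈ A ∩ B, extendF A B f a = a) ∧ cond A B (extendF A B f)
      then mlqW q k A B (extendF A B f) else 0

/-- `η_{s,t}(k)`: the total weight of linked two-row multiline queues of type
`(s, t, k-s-t)` on `Z_k` with disjoint rows whose projected word begins with `2`
(i.e. `1 ∈ B \ f(A)`). -/
def eta (q : ℝ) (s t k : ℕ) : ℝ :=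
  mlqSum q k fun A B F =>
    A ∩ B = ∅ ∧ A.card = s ∧ B.card = s + t ∧ 1 ∈ B ∧ 1 ∉ A.image F

/-- `W^A_{s,t}(n)`: total weight of linked MLQs of type `(s,t,n-s-t)` with
`1 ∉ A`, `2 ∉ A`, `1 ∉ B`, `2 ∈ B`, `2 ∉ f(A)` (projected word begins with `3,2`). -/
def WA (q : ℝ) (s t n : ℕ) : ℝ :=
  mlqSum q n fun A B F =>
    A.card = s ∧ B.card = s + t ∧ 1 ∉ A ∧ 2 ∉ A ∧ 1 ∉ B ∧ 2 ∈ B ∧ 2 ∉ A.image F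

/-- `τ^A_{s,t}(n)`: as `W^A_{s,t}(n)`, restricted to `A ∩ B = ∅`. -/
def tauA (q : ℝ) (s t n : ℕ) : ℝ :=
  mlqSum q n fun A B F =>
    A ∩ B = ∅ ∧
    A.card = s ∧ B.card = s + t ∧ 1 ∉ A ∧ 2 ∉ A ∧ 1 ∉ B ∧ 2 ∈ B ∧ 2 ∉ A.image F

/-- `W^B_{s,t}(n)`: total weight of linked MLQs of type `(s,t,n-s-t)` with
`1 ∈ A`, `2 ∉ A`, `1 ∉ B`, `2 ∈ B`, `2 ∉ f(A)` (projected word begins with `3,2`). -/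
def WB (q : ℝ) (s t n : ℕ) : ℝ :=
  mlqSum q n fun A B F =>
    A.card = s ∧ B.card = s + t ∧ 1 ∈ A ∧ 2 ∉ A ∧ 1 ∉ B ∧ 2 ∈ B ∧ 2 ∉ A.image F

/-- `τ^B_{s,t}(n)`: as `W^B_{s,t}(n)`, restricted to `A ∩ B = ∅`. -/
def tauB (q : ℝ) (s t n : ℕ) : ℝ :=
  mlqSum q n fun A B F =>
    A ∩ B = ∅ ∧
    A.card = s ∧ B.card = s + t ∧ 1 ∈ A ∧ 2 ∉ A ∧ 1 ∉ B ∧ 2 ∈ B ∧ 2 ∉ A.image F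

/-- `W^C_{s,t}(n)`: total weight of linked MLQs of type `(s,t,n-s-t)` with
`1 ∉ A`, `2 ∉ A`, `1 ∈ B`, `2 ∉ B`, `1 ∉ f(A)` (projected word begins with `2,3`). -/
def WC (q : ℝ) (s t n : ℕ) : ℝ :=
  mlqSum q n fun A B F =>
    A.card = s ∧ B.card = s + t ∧ 1 ∉ A ∧ 2 ∉ A ∧ 1 ∈ B ∧ 2 ∉ B ∧ 1 ∉ A.image F

/-- `W^D_{s,t}(n)`: total weight of linked MLQs of type `(s,t,n-s-t)` with
`1 ∉ A`, `2 ∈ A`, `1 ∈ B`, `2 ∉ B`, `1 ∉ f(A)` (projected word begins with `2,3`). -/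
def WD (q : ℝ) (s t n : ℕ) : ℝ :=
  mlqSum q n fun A B F =>
    A.card = s ∧ B.card = s + t ∧ 1 ∉ A ∧ 2 ∈ A ∧ 1 ∈ B ∧ 2 ∉ B ∧ 1 ∉ A.image F

/-- `τ^D_{s,t}(n)`: as `W^D_{s,t}(n)`, restricted to `A ∩ B = ∅`. -/
def tauD (q : ℝ) (s t n : ℕ) : ℝ :=
  mlqSum q n fun A B F =>
    A ∩ B = ∅ ∧
    A.card = s ∧ B.card = s + t ∧ 1 ∉ A ∧ 2 ∈ A ∧ 1 ∈ B ∧ 2 ∉ B ∧ 1 ∉ A.image F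

end

/-- The rotation `x ↦ x + 1` of the ring `Z_k` identified with `{1, …, k}`. -/
def rot (k x : ℕ) : ℕ := x % k + 1

/-- The projected word of a linked multiline queue `(A, B, F)`: site `b` gets the
label `1` if `b ∈ F(A)`, `2` if `b ∈ B \ F(A)`, and `3` if `b ∉ B`. -/
def projW (A B : Finset ℕ) (F : ℕ → ℕ) (b : ℕ) : ℕ :=
  if b ∈ A.image F then 1 else if b ∈ B then 2 else 3

/-!
Rotation is injective on `{1, …, k}` and preserves every cyclic distance `(c - a) mod k`.
Each factor of the weight depends only on how the available sites are ranked by cyclic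
distance from the processed site, so rotating the processed site, the available sites and
the chosen site together leaves it unchanged; by induction along the processing order the
available sets stay rotated copies of each other. The projected word is transported because
`G ∘ rot = rot ∘ F` on `A`.
-/

lemma rot_injOn (k : ℕ) : Set.InjOn (rot k) (Finset.Icc 1 k : Set ℕ) := by
  intro x hx y hy h
  simp only [Finset.coe_Icc, Set.mem_Icc] at hx hy
  unfold rot at h
  rcases hx.2.lt_or_eq with hxk | rfl <;> rcases hy.2.lt_or_eq with hyk | hyk
  · rwa [Nat.mod_eq_of_lt hxk, Nat.mod_eq_of_lt hyk, Nat.add_right_cancel_iff] at h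
  · rw [Nat.mod_eq_of_lt hxk, hyk, Nat.mod_self] at h
    omega
  · rw [Nat.mod_self, Nat.mod_eq_of_lt hyk] at h
    omega
  · exact hyk.symm

lemma mem_image_rot_iff {k b : ℕ} {S : Finset ℕ} (hS : S ⊆ Finset.Icc 1 k)
    (hb : b ∈ Finset.Icc 1 k) : rot k b ∈ S.image (rot k) ↔ b ∈ S := by
  rw [← Finset.mem_coe, Finset.coe_image]
  exact (rot_injOn k).mem_image_iff (Finset.coe_subset.2 hS) hb

lemma image_rot_erase {k m : ℕ} {D : Finset ℕ} (hD : D ⊆ Finset.Icc 1 k)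
    (hm : m ∈ Finset.Icc 1 k) :
    (D.image (rot k)).erase (rot k m) = (D.erase m).image (rot k) := by
  ext y
  simp only [Finset.mem_erase, Finset.mem_image]
  constructor
  · rintro ⟨hne, c, hc, rfl⟩
    exact ⟨c, ⟨fun hcm => hne (hcm ▸ rfl), hc⟩, rfl⟩
  · rintro ⟨c, ⟨hcm, hc⟩, rfl⟩
    exact ⟨fun h => hcm (rot_injOn k (hD hc) hm h), c, hc, rfl⟩

lemma rot_cyclicDist {k a : ℕ} (c : ℕ) (ha : a ≤ k) :
    (rot k c + k - rot k a) % k = (c + k - a) % k := by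
  have hak : a % k ≤ k := (Nat.mod_le a k).trans ha
  have : c % k + k - a % k ≡ c + k - a [MOD k] :=
    Nat.ModEq.add_right_cancel' (a % k) <|
      calc c % k + k - a % k + a % k = c % k + k := by omega
        _ ≡ c + k [MOD k] := (Nat.mod_modEq c k).add_right k
        _ = c + k - a + a := by omega
        _ ≡ c + k - a + a % k [MOD k] := (Nat.mod_modEq a k).symm.add_left _
  unfold rot
  rwa [show c % k + 1 + k - (a % k + 1) = c % k + k - a % k by omega]

lemma stepW_rot (q : ℝ) {k a : ℕ} (ha : a ≤ k) {D : Finset ℕ} (hD : D ⊆ Finset.Icc 1 k)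
    (b : ℕ) : stepW q k (rot k a) (D.image (rot k)) (rot k b) = stepW q k a D b := by
  have hinj : Set.InjOn (rot k) D := (rot_injOn k).mono (Finset.coe_subset.2 hD)
  unfold stepW
  rw [Finset.card_image_of_injOn hinj, Finset.filter_image,
    Finset.card_image_of_injOn (hinj.mono (Finset.filter_subset _ D))]
  simp only [rot_cyclicDist _ ha]

lemma chainW_rot (q : ℝ) {k : ℕ} {F G : ℕ → ℕ} (l : List ℕ) {D : Finset ℕ}
    (hD : D ⊆ Finset.Icc 1 k) (hl : ∀ a ∈ l, a ≤ k) (hF : ∀ a ∈ l, F a ∈ Finset.Icc 1 k)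
    (hG : ∀ a ∈ l, G (rot k a) = rot k (F a)) :
    chainW q k G (l.map (rot k)) (D.image (rot k)) = chainW q k F l D := by
  induction l generalizing D with
  | nil => rfl
  | cons a l ih =>
    simp only [List.forall_mem_cons] at hl hF hG
    rw [List.map_cons, chainW, chainW, hG.1, stepW_rot q hl.1 hD, image_rot_erase hD hF.1,
      ih ((Finset.erase_subset _ D).trans hD) hl.2 hF.2 hG.2]

lemma projW_rot {k b : ℕ} {A B : Finset ℕ} {F G : ℕ → ℕ} (hB : B ⊆ Finset.Icc 1 k)
    (hFmaps : ∀ a ∈ A, F a ∈ B) (hG : ∀ a ∈ A, G (rot k a) = rot k (F a))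
    (hb : b ∈ Finset.Icc 1 k) :
    projW (A.image (rot k)) (B.image (rot k)) G (rot k b) = projW A B F b := by
  have himage : (A.image (rot k)).image G = (A.image F).image (rot k) := by
    rw [Finset.image_image, Finset.image_image]
    exact Finset.image_congr hG
  have hFA : A.image F ⊆ Finset.Icc 1 k :=
    Finset.image_subset_iff.2 fun a ha => hB (hFmaps a ha)
  unfold projW
  simp only [himage, mem_image_rot_iff hFA hb, mem_image_rot_iff hB hb]

theorem rotation_invariance_general (k : ℕ) (q : ℝ)
    (A B : Finset ℕ) (hA : A ⊆ Finset.Icc 1 k) (hB : B ⊆ Finset.Icc 1 k)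
    (F : ℕ → ℕ) (hFmaps : ∀ a ∈ A, F a ∈ B)
    (l : List ℕ) (hl : ∀ a, a ∈ l ↔ a ∈ A)
    (G : ℕ → ℕ) (hG : ∀ a ∈ A, G (rot k a) = rot k (F a)) :
    chainW q k G (l.map (rot k)) (B.image (rot k)) = chainW q k F l B ∧
    ∀ b ∈ Finset.Icc 1 k,
      projW (A.image (rot k)) (B.image (rot k)) G (rot k b) = projW A B F b := by
  have hlA : ∀ a ∈ l, a ∈ A := fun a ha => (hl a).1 ha
  exact ⟨chainW_rot q l hB (fun a ha => (Finset.mem_Icc.1 (hA (hlA a ha))).2)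
      (fun a ha => hB (hFmaps a (hlA a ha))) (fun a ha => hG a (hlA a ha)),
    fun b hb => projW_rot hB hFmaps hG hb⟩

/-- Rotating a linked multiline queue (sets `A`, `B`, processing order `l`,
injection `F` with the rotated injection `G`) preserves the weight, and rotates
the projected word by the same distance. -/
theorem rotation_invariance (k : ℕ) (hk : 1 ≤ k) (q : ℝ) (hq0 : 0 ≤ q) (hq1 : q < 1)
    (A B : Finset ℕ) (hA : A ⊆ Finset.Icc 1 k) (hB : B ⊆ Finset.Icc 1 k)
    (hAB : Disjoint A B) (hcard : A.card ≤ B.card)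
    (F : ℕ → ℕ) (hFinj : Set.InjOn F A) (hFmaps : ∀ a ∈ A, F a ∈ B)
    (l : List ℕ) (hnd : l.Nodup) (hl : ∀ a, a ∈ l ↔ a ∈ A)
    (G : ℕ → ℕ) (hG : ∀ a ∈ A, G (rot k a) = rot k (F a)) :
    chainW q k G (l.map (rot k)) (B.image (rot k)) = chainW q k F l B ∧
    ∀ b ∈ Finset.Icc 1 k,
      projW (A.image (rot k)) (B.image (rot k)) G (rot k b) = projW A B F b :=
  rotation_invariance_general k q A B hA hB F hFmaps l hl G hG
end

section
/- For integers s, t ≥ 0 and n > s + t, the weighted sums satisfy the recursion W^A_{s,t}(n) = Σ_{i=0}^{s} binom(n−2, i) · τ^A_{s−i,t}(n−i). -/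
open scoped Classical

/-!
Group the linked queues counted by `W^A_{s,t}(n)` by their set `C = A ∩ B` of trivial links;
since `1, 2 ∉ A`, `C` is a subset of `{3, …, n}`. Trivial links contribute the factor `1` and
are never available to the other elements of `A`, so deleting the sites of `C` and relabelling
the remaining `n - |C|` sites of `Z_n` in increasing order is a weight-preserving bijection
onto the disjoint-row queues counted by `τ^A_{s-|C|,t}(n-|C|)`: the factors `q^(m-1)/[r]_q`
only depend on the cyclic order of the sites, and the relabelling fixes the sites `1` and `2`.
There are `binom(n-2, i)` choices of `C` with `|C| = i`.
-/

open Finset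

noncomputable section

def linkings (A B : Finset ℕ) : Finset (ℕ → ℕ) :=
  univ.image (extendF A B)

lemma extendF_injective (A B : Finset ℕ) : Function.Injective (extendF A B) := by
  intro f g h
  ext ⟨x, hx⟩
  simpa [extendF, hx] using congrFun h x

lemma mem_linkings {A B : Finset ℕ} {F : ℕ → ℕ} :
    F ∈ linkings A B ↔ (∀ a ∈ A, F a ∈ B) ∧ Set.InjOn F A ∧ ∀ x ∉ A, F x = x := by
  constructor
  · intro hF
    obtain ⟨f, -, rfl⟩ := mem_image.mp hF
    refine ⟨fun a ha => by simp [extendF, ha], fun x hx y hy h => ?_, fun x hx => by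
      simp [extendF, hx]⟩
    simp only [extendF, mem_coe.mp hx, mem_coe.mp hy, dif_pos] at h
    exact congrArg Subtype.val (f.injective (Subtype.ext h))
  · rintro ⟨hmaps, hinj, hid⟩
    refine mem_image.mpr ⟨⟨fun a => ⟨F a, hmaps a a.2⟩, fun x y h => ?_⟩, mem_univ _, ?_⟩
    · exact Subtype.ext (hinj x.2 y.2 (congrArg Subtype.val h))
    · funext x
      by_cases hx : x ∈ A
      · simp [extendF, hx]; rfl
      · simp [extendF, hx, hid x hx]

/-- A linking fixing `A ∩ B` sends `A \ B` into `B \ A`: if `F a ∈ A ∩ B` then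
`F (F a) = F a`, and injectivity forces `a = F a ∈ B`. -/
lemma mem_linkings_sdiff {A B : Finset ℕ} {F : ℕ → ℕ} :
    F ∈ linkings (A \ B) (B \ A) ↔ F ∈ linkings A B ∧ ∀ a ∈ A ∩ B, F a = a := by
  simp only [mem_linkings, mem_sdiff, mem_inter, Set.InjOn, mem_coe, and_imp]
  constructor
  · rintro ⟨hmaps, hinj, hid⟩
    refine ⟨⟨fun a ha => ?_, fun x hx y hy h => ?_, fun x hx => hid x (by tauto)⟩,
      fun a ha hb => hid a (by tauto)⟩
    · by_cases hb : a ∈ B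
      · rw [hid a (by tauto)]; exact hb
      · exact (hmaps a ha hb).1
    · by_cases hxB : x ∈ B <;> by_cases hyB : y ∈ B
      · rwa [hid x (by tauto), hid y (by tauto)] at h
      · rw [hid x (by tauto)] at h; exact absurd hx (h ▸ (hmaps y hy hyB).2)
      · rw [hid y (by tauto)] at h; exact absurd hy (h ▸ (hmaps x hx hxB).2)
      · exact hinj hx hxB hy hyB h
  · rintro ⟨⟨hmaps, hinj, hid⟩, htriv⟩
    refine ⟨fun a ha hb => ⟨hmaps a ha, fun hFa => hb ?_⟩, fun x hx _ y hy _ h => hinj hx hy h,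
      fun x hx => ?_⟩
    · have hfix : F (F a) = F a := htriv _ hFa (hmaps a ha)
      exact hinj hFa ha hfix ▸ hmaps a ha
    · by_cases hxA : x ∈ A
      · exact htriv x hxA (by by_contra hxB; exact hx ⟨hxA, hxB⟩)
      · exact hid x hxA

lemma mlqSum_eq_sum_linkings_sdiff (q : ℝ) (k : ℕ)
    (cond : Finset ℕ → Finset ℕ → (ℕ → ℕ) → Prop) :
    mlqSum q k cond = ∑ A ∈ (Icc 1 k).powerset, ∑ B ∈ (Icc 1 k).powerset,
      ∑ F ∈ linkings (A \ B) (B \ A),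
        if cond A B F then chainW q k F ((A \ B).sort (· ≤ ·)) (B \ A) else 0 := by
  refine sum_congr rfl fun A _ => sum_congr rfl fun B _ => ?_
  have hfilter : (linkings A B).filter (fun F => ∀ a ∈ A ∩ B, F a = a) =
      linkings (A \ B) (B \ A) := by
    ext F; rw [mem_filter, mem_linkings_sdiff]
  rw [← hfilter, sum_filter, linkings, sum_image fun f _ g _ h => extendF_injective A B h]
  simp only [ite_and, mlqW]

lemma sum_powerset_sdiff_inter {α β : Type*} [DecidableEq α] [AddCommMonoid β] (U : Finset α)
    (G : Finset α → Finset α → Finset α → β) :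
    ∑ A ∈ U.powerset, ∑ B ∈ U.powerset, G (A ∩ B) (A \ B) (B \ A) =
      ∑ C ∈ U.powerset, ∑ A ∈ (U \ C).powerset, ∑ B ∈ (U \ C).powerset,
        if Disjoint A B then G C A B else 0 := by
  rw [← sum_product' (f := fun A B => G (A ∩ B) (A \ B) (B \ A)),
    ← sum_fiberwise_of_maps_to (g := fun p => p.1 ∩ p.2) (t := U.powerset) fun p hp => by
      simp only [mem_product, mem_powerset] at hp ⊢
      exact inter_subset_left.trans hp.1]
  refine sum_congr rfl fun C hC => ?_
  rw [← sum_product' (f := fun A B => if Disjoint A B then G C A B else 0), ← sum_filter]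
  apply sum_nbij' (fun p => (p.1 \ p.2, p.2 \ p.1)) (fun p => (p.1 ∪ C, p.2 ∪ C))
  all_goals
    rintro ⟨A, B⟩ h
    simp only [mem_filter, mem_product, mem_powerset] at h hC
  · simp only [mem_filter, mem_product, mem_powerset, ← h.2]
    exact ⟨⟨sdiff_subset_sdiff h.1.1 inter_subset_right,
      sdiff_subset_sdiff h.1.2 inter_subset_left⟩, disjoint_sdiff_sdiff⟩
  · simp only [mem_filter, mem_product, mem_powerset, Finset.subset_iff, mem_sdiff, mem_union,
      Finset.ext_iff, mem_inter, disjoint_left] at h hC ⊢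
    grind
  · simp only [← h.2, sdiff_union_inter, Prod.mk.injEq, true_and]
    rw [inter_comm, sdiff_union_inter]
  · simp only [Finset.subset_iff, mem_sdiff, disjoint_left, Prod.mk.injEq, Finset.ext_iff,
      mem_union] at h hC ⊢
    grind
  · simp [← h.2]

/-- The rows range over subsets of `U`, while the weights are those of `Z_k`. -/
def disjointSum (q : ℝ) (k : ℕ) (U : Finset ℕ)
    (P : Finset ℕ → Finset ℕ → (ℕ → ℕ) → Prop) : ℝ :=
  ∑ A ∈ U.powerset, ∑ B ∈ U.powerset,
    if Disjoint A B then
      ∑ F ∈ linkings A B, if P A B F then chainW q k F (A.sort (· ≤ ·)) B else 0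
    else 0

lemma disjointSum_congr {q : ℝ} {k : ℕ} {U : Finset ℕ}
    {P Q : Finset ℕ → Finset ℕ → (ℕ → ℕ) → Prop}
    (h : ∀ A ⊆ U, ∀ B ⊆ U, Disjoint A B → ∀ F ∈ linkings A B, (P A B F ↔ Q A B F)) :
    disjointSum q k U P = disjointSum q k U Q := by
  refine sum_congr rfl fun A hA => sum_congr rfl fun B hB => ?_
  split_ifs with hAB
  · exact sum_congr rfl fun F hF => by
      rw [if_congr (h A (mem_powerset.mp hA) B (mem_powerset.mp hB) hAB F hF) rfl rfl]
  · rfl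

lemma mlqSum_eq_sum_disjointSum (q : ℝ) (k : ℕ)
    (cond : Finset ℕ → Finset ℕ → (ℕ → ℕ) → Prop) :
    mlqSum q k cond = ∑ C ∈ (Icc 1 k).powerset,
      disjointSum q k (Icc 1 k \ C) fun A B F => cond (A ∪ C) (B ∪ C) F := by
  set G : Finset ℕ → Finset ℕ → Finset ℕ → ℝ := fun C A B =>
    ∑ F ∈ linkings A B, if cond (A ∪ C) (B ∪ C) F then chainW q k F (A.sort (· ≤ ·)) B else 0
  have hA (A B : Finset ℕ) : A \ B ∪ A ∩ B = A := sdiff_union_inter A B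
  have hB (A B : Finset ℕ) : B \ A ∪ A ∩ B = B := by rw [inter_comm, sdiff_union_inter]
  calc mlqSum q k cond
      = ∑ A ∈ (Icc 1 k).powerset, ∑ B ∈ (Icc 1 k).powerset, G (A ∩ B) (A \ B) (B \ A) := by
        simp only [mlqSum_eq_sum_linkings_sdiff, G, hA, hB]
    _ = _ := sum_powerset_sdiff_inter _ G

lemma cyclic_mod_eq {k a x : ℕ} (ha : a ∈ Icc 1 k) (hx : x ∈ Icc 1 k) :
    (x + k - a) % k = if a ≤ x then x - a else x + k - a := by
  rw [mem_Icc] at ha hx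
  split_ifs with h
  · rw [show x + k - a = x - a + k by omega, Nat.add_mod_right, Nat.mod_eq_of_lt (by omega)]
  · exact Nat.mod_eq_of_lt (by omega)

lemma cyclic_lt_iff {k a x y : ℕ} (ha : a ∈ Icc 1 k) (hx : x ∈ Icc 1 k) (hy : y ∈ Icc 1 k) :
    (x + k - a) % k < (y + k - a) % k ↔ (a ≤ x ∧ y < a) ∨ ((a ≤ x ↔ a ≤ y) ∧ x < y) := by
  rw [cyclic_mod_eq ha hx, cyclic_mod_eq ha hy]
  rw [mem_Icc] at ha hx hy
  split_ifs <;> omega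

section Relabel

variable {q : ℝ} {m n : ℕ} {U : Finset ℕ} (φ : ℕ ↪ ℕ)

lemma stepW_map (hU : U ⊆ Icc 1 m) (hφ : StrictMonoOn φ U) (hφn : Set.MapsTo φ U (Icc 1 n))
    {a b : ℕ} {D : Finset ℕ} (ha : a ∈ U) (hb : b ∈ U) (hD : D ⊆ U) :
    stepW q n (φ a) (D.map φ) (φ b) = stepW q m a D b := by
  unfold stepW
  rw [card_map, filter_map, card_map]
  congr 3
  refine filter_congr fun c hc => ?_
  have hc := hD hc
  rw [Function.comp_apply, cyclic_lt_iff (hφn ha) (hφn hc) (hφn hb),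
    cyclic_lt_iff (hU ha) (hU hc) (hU hb), hφ.le_iff_le ha hc, hφ.le_iff_le ha hb,
    hφ.lt_iff_lt hb ha, hφ.lt_iff_lt hc hb]

lemma chainW_map (hU : U ⊆ Icc 1 m) (hφ : StrictMonoOn φ U) (hφn : Set.MapsTo φ U (Icc 1 n))
    {F G : ℕ → ℕ} :
    ∀ (l : List ℕ) (D : Finset ℕ), (∀ a ∈ l, a ∈ U ∧ F a ∈ U ∧ G (φ a) = φ (F a)) → D ⊆ U →
      chainW q n G (l.map φ) (D.map φ) = chainW q m F l D
  | [], _, _, _ => rfl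
  | a :: l, D, hl, hD => by
    obtain ⟨ha, hFa, hGa⟩ := hl a List.mem_cons_self
    rw [List.map_cons, chainW, chainW, hGa, stepW_map φ hU hφ hφn ha hFa hD, ← map_erase,
      chainW_map hU hφ hφn l _ (fun b hb => hl b (List.mem_cons_of_mem a hb))
        ((erase_subset _ _).trans hD)]

end Relabel

lemma linkings_map (σ : Equiv.Perm ℕ) (A B : Finset ℕ) :
    linkings (A.map σ.toEmbedding) (B.map σ.toEmbedding) =
      (linkings A B).map (σ.arrowCongr σ).toEmbedding := by
  ext F
  simp only [mem_map_equiv, mem_linkings, Equiv.arrowCongr_symm, Equiv.arrowCongr_apply,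
    Function.comp_apply, Equiv.symm_symm, Set.InjOn, mem_coe]
  constructor
  · rintro ⟨hmaps, hinj, hid⟩
    refine ⟨fun a ha => hmaps (σ a) (by simpa), fun x hx y hy h => σ.injective ?_,
      fun x hx => by simp [hid (σ x) (by simpa)]⟩
    exact hinj (by simpa) (by simpa) (σ.symm.injective h)
  · rintro ⟨hmaps, hinj, hid⟩
    refine ⟨fun a ha => by simpa using hmaps _ ha, fun x hx y hy h => σ.symm.injective ?_,
      fun x hx => by simpa using congrArg σ (hid _ hx)⟩
    exact hinj hx hy (by simp [h])

lemma sum_powerset_map {α β M : Type*} [AddCommMonoid M] (f : α ↪ β) (U : Finset α)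
    (g : Finset β → M) : ∑ A ∈ (U.map f).powerset, g A = ∑ A ∈ U.powerset, g (A.map f) := by
  classical
  rw [map_eq_image, powerset_image, sum_image fun A _ B _ h => image_injective f.injective h]
  simp only [map_eq_image]

lemma disjointSum_map {q : ℝ} {m n : ℕ} {U : Finset ℕ} (σ : Equiv.Perm ℕ) (hU : U ⊆ Icc 1 m)
    (hσ : StrictMonoOn σ U) (hσn : Set.MapsTo σ U (Icc 1 n))
    (P : Finset ℕ → Finset ℕ → (ℕ → ℕ) → Prop) :
    disjointSum q n (U.map σ.toEmbedding) P = disjointSum q m U fun A B F =>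
      P (A.map σ.toEmbedding) (B.map σ.toEmbedding) (σ.arrowCongr σ F) := by
  unfold disjointSum
  rw [sum_powerset_map]
  refine sum_congr rfl fun A hA => ?_
  rw [sum_powerset_map]
  refine sum_congr rfl fun B hB => ?_
  rw [linkings_map, sum_map]
  refine if_congr (disjoint_map _) (sum_congr rfl fun F hF => if_congr Iff.rfl ?_ rfl) rfl
  rw [mem_powerset] at hA hB
  have hσA : StrictMonoOn σ.toEmbedding A := hσ.mono (coe_subset.mpr hA)
  rw [Equiv.coe_toEmbedding, ← hσA.map_finsetSort]
  refine chainW_map σ.toEmbedding hU hσ hσn _ _ (fun a ha => ?_) hB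
  rw [mem_sort] at ha
  exact ⟨hA ha, hB ((mem_linkings.mp hF).1 a ha), by simp⟩

lemma exists_perm_strictMonoOn_map_Icc (D : Finset ℕ) :
    ∃ σ : Equiv.Perm ℕ, StrictMonoOn σ (Icc 1 #D) ∧ (Icc 1 #D).map σ.toEmbedding = D := by
  let g := D.orderEmbOfFin rfl
  obtain ⟨σ, hσ⟩ := Equiv.Perm.exists_extending_pair (fun i : Fin #D => (i : ℕ) + 1) g
    (fun i j h => Fin.ext (by simpa using h)) g.injective
  have hσg (x : ℕ) (hx : x ∈ Icc 1 #D) :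
      σ x = g ⟨x - 1, Nat.sub_one_lt_of_le (mem_Icc.mp hx).1 (mem_Icc.mp hx).2⟩ := by
    have h := hσ ⟨x - 1, Nat.sub_one_lt_of_le (mem_Icc.mp hx).1 (mem_Icc.mp hx).2⟩
    rwa [Nat.sub_add_cancel (mem_Icc.mp hx).1] at h
  refine ⟨σ, fun x hx y hy hxy => ?_, eq_of_subset_of_card_le (fun y hy => ?_) ?_⟩
  · rw [hσg x hx, hσg y hy, g.lt_iff_lt, Fin.mk_lt_mk]
    rw [coe_Icc, Set.mem_Icc] at hx hy; omega
  · obtain ⟨x, hx, rfl⟩ := mem_map.mp hy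
    rw [Equiv.coe_toEmbedding, hσg x hx]
    exact D.orderEmbOfFin_mem rfl _
  · rw [card_map, Nat.card_Icc, Nat.add_sub_cancel]

lemma StrictMonoOn.eq_self_of_surjOn_Icc {f : ℕ → ℕ} {m j : ℕ} (hf : StrictMonoOn f (Icc 1 m))
    (hpos : Set.MapsTo f (Icc 1 m) (Set.Ici 1)) (hsurj : Set.SurjOn f (Icc 1 m) (Icc 1 j)) :
    ∀ x ∈ Icc 1 j, f x = x := by
  intro x
  induction x using Nat.strong_induction_on with
  | _ x ih =>
  intro hx
  obtain ⟨y, hy, hyx⟩ := hsurj (mem_coe.mpr hx)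
  rw [mem_Icc] at hx
  rw [mem_coe, mem_Icc] at hy
  have hxy : x ≤ y := by
    by_contra h
    have := ih y (by omega) (mem_Icc.mpr (by omega))
    omega
  have hxm : x ∈ (Icc 1 m : Set ℕ) := by rw [coe_Icc]; exact ⟨hx.1, by omega⟩
  have hle : f x ≤ x := hyx ▸ hf.monotoneOn hxm (by rw [coe_Icc]; exact hy) hxy
  have hge : x ≤ f x := by
    rcases Nat.lt_or_ge x 2 with h | h
    · have := hpos hxm; rw [Set.mem_Ici] at this; omega
    · have hlt := hf (by rw [coe_Icc]; exact ⟨by omega, by omega⟩) hxm (show x - 1 < x by omega)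
      rw [ih (x - 1) (by omega) (mem_Icc.mpr (by omega))] at hlt
      omega
  omega

def IsClassA (s t : ℕ) (A B : Finset ℕ) (F : ℕ → ℕ) : Prop :=
  A.card = s ∧ B.card = s + t ∧ 1 ∉ A ∧ 2 ∉ A ∧ 1 ∉ B ∧ 2 ∈ B ∧ 2 ∉ A.image F

lemma tauA_eq_disjointSum (q : ℝ) (s t n : ℕ) :
    tauA q s t n = disjointSum q n (Icc 1 n) (IsClassA s t) := by
  rw [tauA, mlqSum_eq_sum_linkings_sdiff]
  refine sum_congr rfl fun A _ => sum_congr rfl fun B _ => ?_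
  by_cases h : Disjoint A B
  · rw [if_pos h, sdiff_eq_self_of_disjoint h, sdiff_eq_self_of_disjoint h.symm]
    refine sum_congr rfl fun F _ => ?_
    simp only [disjoint_iff_inter_eq_empty.mp h, true_and, IsClassA]
    congr
  · rw [if_neg h]
    exact sum_eq_zero fun F _ => if_neg fun hc => h (disjoint_iff_inter_eq_empty.mpr hc.1)

lemma isClassA_union_iff {s t : ℕ} {A B C : Finset ℕ} {F : ℕ → ℕ} (hA : Disjoint A C)
    (hB : Disjoint B C) (hF : ∀ x ∈ C, F x = x) :
    IsClassA s t (A ∪ C) (B ∪ C) F ↔ (1 ∉ C ∧ 2 ∉ C ∧ #C ≤ s) ∧ IsClassA (s - #C) t A B F := by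
  have himage : (A ∪ C).image F = A.image F ∪ C := by
    rw [image_union, image_congr (g := id) fun x hx => hF x hx, image_id]
  unfold IsClassA
  rw [card_union_of_disjoint hA, card_union_of_disjoint hB, himage]
  simp only [mem_union, not_or]
  grind

lemma isClassA_map_iff {s t : ℕ} {A B : Finset ℕ} {F : ℕ → ℕ} (σ : Equiv.Perm ℕ) (h1 : σ 1 = 1)
    (h2 : σ 2 = 2) :
    IsClassA s t (A.map σ.toEmbedding) (B.map σ.toEmbedding) (σ.arrowCongr σ F) ↔
      IsClassA s t A B F := by
  have himage : (A.map σ.toEmbedding).image (σ.arrowCongr σ F) = (A.image F).map σ.toEmbedding := by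
    rw [map_eq_image, image_image, map_eq_image, image_image]
    exact image_congr fun x _ => by simp
  have hmem (S : Finset ℕ) {x : ℕ} (hx : σ x = x) : x ∈ S.map σ.toEmbedding ↔ x ∈ S := by
    rw [mem_map_equiv, σ.symm_apply_eq.mpr hx.symm]
  unfold IsClassA
  rw [card_map, card_map, himage, hmem A h1, hmem A h2, hmem B h1, hmem B h2, hmem _ h2]

lemma disjointSum_sdiff_eq_tauA (q : ℝ) (s t : ℕ) {n : ℕ} {C : Finset ℕ} (hC : C ⊆ Icc 3 n) :
    disjointSum q n (Icc 1 n \ C) (IsClassA s t) = tauA q s t (n - #C) := by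
  rcases C.eq_empty_or_nonempty with rfl | ⟨c, hc⟩
  · rw [sdiff_empty, card_empty, Nat.sub_zero, tauA_eq_disjointSum]
  have hn : 3 ≤ n := (mem_Icc.mp (hC hc)).1.trans (mem_Icc.mp (hC hc)).2
  set D := Icc 1 n \ C
  have hCn : C ⊆ Icc 1 n := hC.trans (Icc_subset_Icc_left (by norm_num))
  have hD : #D = n - #C := by rw [card_sdiff_of_subset hCn, Nat.card_Icc, Nat.add_sub_cancel]
  obtain ⟨σ, hσ, hmap⟩ := exists_perm_strictMonoOn_map_Icc D
  have hσn : Set.MapsTo σ (Icc 1 #D) (Icc 1 n) := fun x hx =>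
    sdiff_subset (hmap ▸ mem_map_of_mem σ.toEmbedding hx)
  have h12 : ∀ x ∈ Icc 1 2, σ x = x := by
    refine hσ.eq_self_of_surjOn_Icc (fun x hx => (mem_Icc.mp (hσn hx)).1) fun y hy => ?_
    have hyD : y ∈ D := by
      rw [mem_coe, mem_Icc] at hy
      exact mem_sdiff.mpr ⟨mem_Icc.mpr ⟨hy.1, by omega⟩, fun h => by
        have := (mem_Icc.mp (hC h)).1; omega⟩
    obtain ⟨x, hx, rfl⟩ := mem_map.mp (hmap ▸ hyD)
    exact ⟨x, hx, rfl⟩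
  calc disjointSum q n D (IsClassA s t)
      = disjointSum q n ((Icc 1 #D).map σ.toEmbedding) (IsClassA s t) := by rw [hmap]
    _ = disjointSum q #D (Icc 1 #D) fun A B F => IsClassA s t (A.map σ.toEmbedding)
          (B.map σ.toEmbedding) (σ.arrowCongr σ F) := disjointSum_map σ subset_rfl hσ hσn _
    _ = tauA q s t (n - #C) := by
      simp only [isClassA_map_iff σ (h12 1 (by simp)) (h12 2 (by simp))]
      rw [tauA_eq_disjointSum, hD]

lemma disjointSum_union_isClassA (q : ℝ) (s t : ℕ) {n : ℕ} {C : Finset ℕ} (hC : C ⊆ Icc 1 n) :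
    (disjointSum q n (Icc 1 n \ C) fun A B F => IsClassA s t (A ∪ C) (B ∪ C) F) =
      if C ⊆ Icc 3 n ∧ #C ≤ s then tauA q (s - #C) t (n - #C) else 0 := by
  have h12 : (1 ∉ C ∧ 2 ∉ C) ↔ C ⊆ Icc 3 n := by
    refine ⟨fun h x hx => ?_, fun h => ⟨fun h1 => ?_, fun h2 => ?_⟩⟩
    · have := mem_Icc.mp (hC hx)
      exact mem_Icc.mpr ⟨by rcases h with ⟨h1, h2⟩; by_contra; interval_cases x <;> simp_all,
        this.2⟩
    · simpa using h h1
    · simpa using h h2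
  rw [disjointSum_congr (Q := fun A B F => (C ⊆ Icc 3 n ∧ #C ≤ s) ∧ IsClassA (s - #C) t A B F)
    fun A hA B hB _ F hF => ?_]
  · split_ifs with h
    · simp only [h, true_and]
      exact disjointSum_sdiff_eq_tauA q _ t h.1
    · simp [h, disjointSum]
  · rw [isClassA_union_iff (disjoint_of_subset_left hA sdiff_disjoint)
      (disjoint_of_subset_left hB sdiff_disjoint)
      fun x hx => (mem_linkings.mp hF).2.2 x fun h => (mem_sdiff.mp (hA h)).2 hx, ← h12]
    simp only [and_assoc]

lemma sum_range_succ_eq_of_eq_zero {M : Type*} [AddCommMonoid M] {f : ℕ → M} {a b : ℕ}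
    (ha : ∀ i, a < i → f i = 0) (hb : ∀ i, b < i → f i = 0) :
    ∑ i ∈ range (a + 1), f i = ∑ i ∈ range (b + 1), f i := by
  wlog hab : a ≤ b
  · exact (this hb ha (by omega)).symm
  exact sum_subset (range_subset_range.mpr (by omega)) fun i _ hi =>
    ha i (by rw [mem_range] at hi; omega)

end

theorem WA_recursion_general (q : ℝ) (s t n : ℕ) :
    WA q s t n =
      ∑ i ∈ Finset.range (s + 1), ((n - 2).choose i : ℝ) * tauA q (s - i) t (n - i) := by
  set τ : ℕ → ℝ := fun i => if i ≤ s then tauA q (s - i) t (n - i) else 0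
  have hsub : (Icc 3 n).powerset ⊆ (Icc 1 n).powerset :=
    powerset_mono.mpr (Icc_subset_Icc_left (by norm_num))
  calc WA q s t n
      = ∑ C ∈ (Icc 1 n).powerset, if C ⊆ Icc 3 n ∧ #C ≤ s then tauA q (s - #C) t (n - #C)
          else 0 := by
        rw [show WA q s t n = mlqSum q n (IsClassA s t) from rfl, mlqSum_eq_sum_disjointSum]
        exact sum_congr rfl fun C hC => disjointSum_union_isClassA q s t (mem_powerset.mp hC)
    _ = ∑ C ∈ (Icc 3 n).powerset, τ #C := by
        refine (sum_subset hsub fun C _ hC => if_neg fun h => hC (mem_powerset.mpr h.1)).symm.trans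
          (sum_congr rfl fun C hC => ?_)
        simp [τ, mem_powerset.mp hC]
    _ = ∑ i ∈ range (n - 2 + 1), ((n - 2).choose i : ℝ) * τ i := by
        rw [sum_powerset_apply_card, Nat.card_Icc]
        simp only [nsmul_eq_mul]
        rfl
    _ = ∑ i ∈ range (s + 1), ((n - 2).choose i : ℝ) * τ i :=
        sum_range_succ_eq_of_eq_zero (fun i hi => by simp [Nat.choose_eq_zero_of_lt hi])
          fun i hi => by simp [τ, Nat.not_le.mpr hi]
    _ = _ := sum_congr rfl fun i hi => by simp [τ, Nat.lt_succ_iff.mp (mem_range.mp hi)]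

/-- Recursion `W^A_{s,t}(n) = Σ_{i=0}^{s} C(n-2, i) · τ^A_{s-i,t}(n-i)`. -/
theorem WA_recursion (q : ℝ) (hq0 : 0 ≤ q) (hq1 : q < 1)
    (s t n : ℕ) (hn : s + t < n) :
    WA q s t n =
      ∑ i ∈ Finset.range (s + 1), ((n - 2).choose i : ℝ) * tauA q (s - i) t (n - i) :=
  WA_recursion_general q s t n
end

section
/- For all integers s, t ≥ 0 and k > 1 with s + t ≤ k − 1, one has τ^A_{s,t}(k) = η_{s,t}(k−1): deleting the empty first column of a type-(A) multiline queue with disjoint rows gives a weight-preserving bijection with the linked multiline queues counted by η_{s,t}(k−1). -/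
open scoped Classical

/-!
Since `1` lies in neither row, shifting every entry down by one identifies the queues counted
by `τ^A_{s,t}(k)` with those counted by `η_{s,t}(k-1)`, linkings included: `2 ∈ B` and
`2 ∉ f(A)` become `1 ∈ B` and `1 ∉ f(A)`, while `2 ∉ A` is forced by disjointness. The weights
agree because the weight only depends on the cyclic orders seen from the elements of the first
row, and on `{2, …, k}` the order `a, a+1, …, k, 2, …, a-1` in `Z_k` is the shift of the
corresponding order in `Z_{k-1}`.
-/

open Finset

theorem Finset.powerset_map {α β : Type*} (f : α ↪ β) (s : Finset α) :
    (s.map f).powerset = s.powerset.map (mapEmbedding f).toEmbedding := by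
  ext t
  simp [subset_map_iff, eq_comm]

theorem Nat.add_sub_mod_eq_ite {m a c : ℕ} (ha : a ≤ m) (hc : c < a + m) :
    (c + m - a) % m = if a ≤ c then c - a else c + m - a := by
  split_ifs
  · rw [show c + m - a = c - a + m by omega, Nat.add_mod_right, Nat.mod_eq_of_lt (by omega)]
  · exact Nat.mod_eq_of_lt (by omega)

theorem cyclicDist_succ_lt_iff {n a b c : ℕ} (ha : a ∈ Icc 1 n) (hb : b ∈ Icc 1 n)
    (hc : c ∈ Icc 1 n) :
    (c + 1 + (n + 1) - (a + 1)) % (n + 1) < (b + 1 + (n + 1) - (a + 1)) % (n + 1) ↔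
      (c + n - a) % n < (b + n - a) % n := by
  simp only [mem_Icc] at ha hb hc
  rw [Nat.add_sub_mod_eq_ite (by omega) (by omega), Nat.add_sub_mod_eq_ite (by omega) (by omega),
    Nat.add_sub_mod_eq_ite (by omega) (by omega), Nat.add_sub_mod_eq_ite (by omega) (by omega)]
  split_ifs <;> omega

section Shift

variable (q : ℝ) {n : ℕ}

theorem stepW_map_succ {a b : ℕ} {D : Finset ℕ} (ha : a ∈ Icc 1 n) (hb : b ∈ Icc 1 n)
    (hD : D ⊆ Icc 1 n) :
    stepW q (n + 1) (a + 1) (D.map (addRightEmbedding 1)) (b + 1) = stepW q n a D b := by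
  unfold stepW
  rw [filter_map, card_map, card_map]
  congr 3
  exact filter_congr fun c hc => cyclicDist_succ_lt_iff ha hb (hD hc)

theorem chainW_map_succ {F F' : ℕ → ℕ} :
    ∀ (l : List ℕ) (D : Finset ℕ), (∀ a ∈ l, a ∈ Icc 1 n ∧ F' a ∈ Icc 1 n) → D ⊆ Icc 1 n →
      (∀ a ∈ l, F (a + 1) = F' a + 1) →
      chainW q (n + 1) F (l.map (· + 1)) (D.map (addRightEmbedding 1)) = chainW q n F' l D
  | [], _, _, _, _ => rfl
  | a :: l, D, hl, hD, hF => by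
    have ha := hl a List.mem_cons_self
    have hFa : F (a + 1) = F' a + 1 := hF a List.mem_cons_self
    have hrest := chainW_map_succ l (D.erase (F' a))
      (fun x hx => hl x (List.mem_cons_of_mem a hx)) ((erase_subset _ _).trans hD)
      (fun x hx => hF x (List.mem_cons_of_mem a hx))
    rw [map_erase, addRightEmbedding_apply] at hrest
    simp only [List.map_cons, chainW, hFa, stepW_map_succ q ha.1 ha.2 hD, hrest]

theorem mlqW_map_succ {A B : Finset ℕ} {F F' : ℕ → ℕ} (hA : A ⊆ Icc 1 n)
    (hF' : ∀ a ∈ A, F' a ∈ B) (hB : B ⊆ Icc 1 n) (hF : ∀ a ∈ A, F (a + 1) = F' a + 1) :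
    mlqW q (n + 1) (A.map (addRightEmbedding 1)) (B.map (addRightEmbedding 1)) F =
      mlqW q n A B F' := by
  unfold mlqW
  have hsort : ((A \ B).sort (· ≤ ·)).map (· + 1) =
      ((A \ B).map (addRightEmbedding 1)).sort (· ≤ ·) :=
    map_sort (addRightEmbedding 1) _ _ _ fun _ _ _ _ => Nat.add_le_add_iff_right.symm
  rw [← Finset.map_sdiff, ← Finset.map_sdiff, ← hsort]
  refine chainW_map_succ q _ _ (fun a ha => ?_) (sdiff_subset.trans hB) (fun a ha => ?_)
  · have ha' := (mem_sdiff.1 ((mem_sort _).1 ha)).1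
    exact ⟨hA ha', hB (hF' a ha')⟩
  · exact hF a (mem_sdiff.1 ((mem_sort _).1 ha)).1

end Shift

theorem sum_powerset_Icc_one_succ {M : Type*} [AddCommMonoid M] (n : ℕ) (g : Finset ℕ → M)
    (hg : ∀ A, 1 ∈ A → g A = 0) :
    ∑ A ∈ (Icc 1 (n + 1)).powerset, g A =
      ∑ A ∈ (Icc 1 n).powerset, g (A.map (addRightEmbedding 1)) := by
  rw [← insert_Icc_add_one_left_eq_Icc (by omega : 1 ≤ n + 1), sum_powerset_insert (by simp),
    sum_eq_zero fun A _ => hg _ (mem_insert_self _ _), add_zero, ← map_add_right_Icc,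
    powerset_map, sum_map]
  rfl

noncomputable def linkingMap (σ : ℕ ↪ ℕ) (A B : Finset ℕ) :
    (↥A ↪ ↥B) ≃ (↥(A.map σ) ↪ ↥(B.map σ)) :=
  Equiv.embeddingCongr (equivMap σ A) (equivMap σ B)

theorem extendF_mem {A B : Finset ℕ} (f : ↥A ↪ ↥B) {a : ℕ} (ha : a ∈ A) :
    extendF A B f a ∈ B := by
  simp only [extendF, dif_pos ha, coe_mem]

theorem extendF_linkingMap (σ : ℕ ↪ ℕ) {A B : Finset ℕ} (f : ↥A ↪ ↥B) {a : ℕ} (ha : a ∈ A) :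
    extendF (A.map σ) (B.map σ) (linkingMap σ A B f) (σ a) = σ (extendF A B f a) := by
  have hsymm : (equivMap σ A).symm ⟨σ a, mem_map_of_mem σ ha⟩ = ⟨a, ha⟩ :=
    (equivMap σ A).symm_apply_eq.2 rfl
  simp [extendF, ha, linkingMap, Equiv.embeddingCongr_apply, hsymm]

theorem forall_mem_inter_map_iff (σ : ℕ ↪ ℕ) {A B : Finset ℕ} {F F' : ℕ → ℕ}
    (hF : ∀ a ∈ A, F (σ a) = σ (F' a)) :
    (∀ x ∈ A.map σ ∩ B.map σ, F x = x) ↔ ∀ a ∈ A ∩ B, F' a = a := by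
  rw [← Finset.map_inter, forall_mem_map]
  refine forall₂_congr fun a ha => ?_
  rw [hF a (mem_inter.1 ha).1, σ.injective.eq_iff]

theorem mlqSum_succ (q : ℝ) (n : ℕ) (cond cond' : Finset ℕ → Finset ℕ → (ℕ → ℕ) → Prop)
    (h_one : ∀ A B F, cond A B F → 1 ∉ A ∧ 1 ∉ B)
    (h_cond : ∀ A B F F', A ⊆ Icc 1 n → B ⊆ Icc 1 n → (∀ a ∈ A, F (a + 1) = F' a + 1) →
      (cond (A.map (addRightEmbedding 1)) (B.map (addRightEmbedding 1)) F ↔ cond' A B F')) :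
    mlqSum q (n + 1) cond = mlqSum q n cond' := by
  unfold mlqSum
  rw [sum_powerset_Icc_one_succ]
  swap
  · exact fun A hA => sum_eq_zero fun B _ => sum_eq_zero fun f _ =>
      if_neg fun h => (h_one _ _ _ h.2).1 hA
  refine sum_congr rfl fun A hA => ?_
  rw [sum_powerset_Icc_one_succ]
  swap
  · exact fun B hB => sum_eq_zero fun f _ => if_neg fun h => (h_one _ _ _ h.2).2 hB
  refine sum_congr rfl fun B hB => (Fintype.sum_equiv (linkingMap _ A B) _ _ fun f => ?_).symm
  have hA := mem_powerset.1 hA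
  have hB := mem_powerset.1 hB
  have hF : ∀ a ∈ A, extendF _ _ (linkingMap _ A B f) (addRightEmbedding 1 a) =
      addRightEmbedding 1 (extendF A B f a) :=
    fun a ha => extendF_linkingMap _ f ha
  exact if_congr (and_congr (forall_mem_inter_map_iff _ hF) (h_cond _ _ _ _ hA hB hF)).symm
    (mlqW_map_succ q hA (fun a ha => extendF_mem f ha) hB hF).symm rfl

theorem image_map_addRightEmbedding {A : Finset ℕ} {F F' : ℕ → ℕ}
    (hF : ∀ a ∈ A, F (a + 1) = F' a + 1) :
    (A.map (addRightEmbedding 1)).image F = (A.image F').map (addRightEmbedding 1) := by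
  rw [map_eq_image, map_eq_image, image_image, image_image]
  exact image_congr fun a ha => hF a ha

theorem tauA_eq_eta_general (q : ℝ)
    (s t k : ℕ) (hk : 1 < k) :
    tauA q s t k = eta q s t (k - 1) := by
  obtain ⟨n, rfl⟩ : ∃ n, k = n + 1 := ⟨k - 1, by omega⟩
  refine mlqSum_succ q n _ _ (fun A B F h => ⟨h.2.2.2.1, h.2.2.2.2.2.1⟩)
    fun A B F F' hA hB hF => ?_
  have one_notMem_map : ∀ S ⊆ Icc 1 n, 1 ∉ S.map (addRightEmbedding 1) := fun S hS h =>
    Nat.not_succ_le_zero 0 (mem_Icc.1 (hS (by simpa using h))).1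
  have two_mem_map (S : Finset ℕ) : 2 ∈ S.map (addRightEmbedding 1) ↔ 1 ∈ S :=
    mem_map' (addRightEmbedding 1)
  have one_notMem_of_disjoint : A ∩ B = ∅ → 1 ∈ B → 1 ∉ A := fun hAB h1B h1A => by
    simpa [hAB] using mem_inter.2 ⟨h1A, h1B⟩
  rw [image_map_addRightEmbedding hF, ← Finset.map_inter, map_eq_empty, card_map, card_map,
    two_mem_map, two_mem_map, two_mem_map]
  simp only [one_notMem_map A hA, one_notMem_map B hB, not_false_eq_true, true_and]
  tauto

/-- `τ^A_{s,t}(k) = η_{s,t}(k-1)`: deleting the empty first column of a type-(A)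
multiline queue with disjoint rows is a weight-preserving bijection with the
linked multiline queues counted by `η_{s,t}(k-1)`. -/
theorem tauA_eq_eta (q : ℝ) (hq0 : 0 ≤ q) (hq1 : q < 1)
    (s t k : ℕ) (hk : 1 < k) (hst : s + t ≤ k - 1) :
    tauA q s t k = eta q s t (k - 1) :=
  tauA_eq_eta_general q s t k hk
end

section
/- For all integers s, t ≥ 0, n ≥ 2 with s + t ≤ n and any real q ∈ [0,1), one has W^C_{s,t}(n) = W^A_{s,t}(n): interchanging the first two columns gives a weight-preserving bijection between the linked multiline queues counted by W^C and those counted by W^A. -/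
open scoped Classical

/-! Swap columns `1` and `2` of the second row and compose every link with the swap. Both
families force the first row and every link target into columns `≥ 3`, so the swap merely
exchanges `1 ∈ B, 2 ∉ B` with `2 ∈ B, 1 ∉ B`, and it keeps every weight factor: seen from a
column `a ≥ 3`, the columns `1` and `2` are cyclically adjacent, so they stand in the same
position relative to every target `b ≥ 3` in the order of cyclic distance from `a`. -/

open Finset

lemma extendF_embeddingCongr (σ : Equiv.Perm ℕ) {A B : Finset ℕ} (f : ↥A ↪ ↥B)
    (hB : ∀ x, x ∈ B ↔ σ x ∈ B.map σ.toEmbedding) :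
    extendF A (B.map σ.toEmbedding)
        (Equiv.embeddingCongr (Equiv.refl A) (σ.subtypeEquiv hB) f) =
      A.piecewise (σ ∘ extendF A B f) id := by
  funext x
  by_cases hx : x ∈ A <;> simp [extendF, hx]

theorem mlqSum_eq_of_perm {q : ℝ} {k : ℕ} (σ : Equiv.Perm ℕ)
    (hσ : ∀ x, σ x ∈ Icc 1 k ↔ x ∈ Icc 1 k)
    {cond cond' : Finset ℕ → Finset ℕ → (ℕ → ℕ) → Prop}
    (hcond : ∀ A B F, ((∀ a ∈ A ∩ B, F a = a) ∧ cond A B F) ↔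
      ((∀ a ∈ A ∩ B.map σ.toEmbedding, A.piecewise (σ ∘ F) id a = a) ∧
        cond' A (B.map σ.toEmbedding) (A.piecewise (σ ∘ F) id)))
    (hwt : ∀ A B F, A ⊆ Icc 1 k → B ⊆ Icc 1 k → (∀ a ∈ A, F a ∈ B) →
      (∀ a ∈ A ∩ B, F a = a) ∧ cond A B F →
      mlqW q k A (B.map σ.toEmbedding) (A.piecewise (σ ∘ F) id) = mlqW q k A B F) :
    mlqSum q k cond = mlqSum q k cond' := by
  unfold mlqSum
  refine sum_congr rfl fun A hA => ?_
  refine sum_equiv σ.finsetCongr (fun B => ?_) fun B hB => ?_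
  · rw [Equiv.finsetCongr_apply, mem_powerset, mem_powerset]
    refine ⟨fun h x hx => ?_, fun h x hx => (hσ x).1 (h (mem_map_of_mem _ hx))⟩
    obtain ⟨y, hy, rfl⟩ := mem_map.1 hx
    exact (hσ y).2 (h hy)
  have hσB : ∀ x, x ∈ B ↔ σ x ∈ B.map σ.toEmbedding := by simp
  refine Fintype.sum_equiv (Equiv.embeddingCongr (Equiv.refl A) (σ.subtypeEquiv hσB)) _ _
    fun f => ?_
  simp only [Equiv.finsetCongr_apply, extendF_embeddingCongr]
  by_cases h : (∀ a ∈ A ∩ B, extendF A B f a = a) ∧ cond A B (extendF A B f)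
  · have hFB : ∀ a ∈ A, extendF A B f a ∈ B := fun a ha => by simp [extendF, ha]
    rw [if_pos h, if_pos ((hcond _ _ _).1 h),
      hwt _ _ _ (mem_powerset.1 hA) (mem_powerset.1 hB) hFB h]
  · rw [if_neg h, if_neg (mt (hcond _ _ _).2 h)]

lemma chainW_congr {q : ℝ} {k : ℕ} {F G : ℕ → ℕ} :
    ∀ {l : List ℕ}, (∀ a ∈ l, F a = G a) → ∀ D, chainW q k F l D = chainW q k G l D
  | [], _, _ => rfl
  | a :: l, h, D => by
    rw [chainW, chainW, h a List.mem_cons_self,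
      chainW_congr (fun x hx => h x (List.mem_cons_of_mem a hx))]

lemma swap_one_two_mem_Icc_iff {n : ℕ} (hn : 2 ≤ n) (x : ℕ) :
    Equiv.swap 1 2 x ∈ Icc 1 n ↔ x ∈ Icc 1 n := by
  rcases eq_or_ne x 1 with rfl | h1
  · simp only [Equiv.swap_apply_left, mem_Icc]; omega
  rcases eq_or_ne x 2 with rfl | h2
  · simp only [Equiv.swap_apply_right, mem_Icc]; omega
  rw [Equiv.swap_apply_of_ne_of_ne h1 h2]

lemma cyclic_dist_one_lt_iff_two_lt {n a b : ℕ} (ha : a ∈ Icc 3 n) (hb : b ∈ Icc 3 n) :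
    (1 + n - a) % n < (b + n - a) % n ↔ (2 + n - a) % n < (b + n - a) % n := by
  rw [mem_Icc] at ha hb
  rw [Nat.mod_eq_of_lt (a := 1 + n - a) (by omega), Nat.mod_eq_of_lt (a := 2 + n - a) (by omega)]
  rcases le_or_gt a b with hab | hab
  · rw [show b + n - a = b - a + n by omega, Nat.add_mod_right, Nat.mod_eq_of_lt (by omega)]
    omega
  · rw [Nat.mod_eq_of_lt (by omega)]
    omega

lemma stepW_map_swap (q : ℝ) {n a b : ℕ} (ha : a ∈ Icc 3 n) (hb : b ∈ Icc 3 n)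
    (D : Finset ℕ) :
    stepW q n a (D.map (Equiv.swap 1 2).toEmbedding) b = stepW q n a D b := by
  have hswap : ∀ c, (Equiv.swap 1 2 c + n - a) % n < (b + n - a) % n ↔
      (c + n - a) % n < (b + n - a) % n := by
    intro c
    rcases eq_or_ne c 1 with rfl | h1
    · simpa using (cyclic_dist_one_lt_iff_two_lt ha hb).symm
    rcases eq_or_ne c 2 with rfl | h2
    · simpa using cyclic_dist_one_lt_iff_two_lt ha hb
    rw [Equiv.swap_apply_of_ne_of_ne h1 h2]
  unfold stepW
  rw [filter_map, card_map, card_map]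
  simp only [Function.comp_def, Equiv.coe_toEmbedding, hswap]

lemma chainW_map_swap (q : ℝ) {n : ℕ} {F : ℕ → ℕ} :
    ∀ {l : List ℕ}, (∀ a ∈ l, a ∈ Icc 3 n ∧ F a ∈ Icc 3 n) →
      ∀ D, chainW q n F l (D.map (Equiv.swap 1 2).toEmbedding) = chainW q n F l D
  | [], _, _ => rfl
  | a :: l, h, D => by
    obtain ⟨ha, hFa⟩ := h a List.mem_cons_self
    have hFa_fixed : Equiv.swap 1 2 (F a) = F a := by
      rw [mem_Icc] at hFa
      exact Equiv.swap_apply_of_ne_of_ne (by omega) (by omega)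
    have herase : (D.map (Equiv.swap 1 2).toEmbedding).erase (F a) =
        (D.erase (F a)).map (Equiv.swap 1 2).toEmbedding := by
      rw [map_erase, Equiv.coe_toEmbedding, hFa_fixed]
    rw [chainW, chainW, herase, stepW_map_swap q ha hFa,
      chainW_map_swap q (fun x hx => h x (List.mem_cons_of_mem a hx))]

lemma swap_one_two_apply_of_mem {A : Finset ℕ} (h1 : 1 ∉ A) (h2 : 2 ∉ A) {a : ℕ} (ha : a ∈ A) :
    Equiv.swap 1 2 a = a :=
  Equiv.swap_apply_of_ne_of_ne (ne_of_mem_of_not_mem ha h1) (ne_of_mem_of_not_mem ha h2)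

lemma mem_Icc_three_of_ne {n x : ℕ} (hx : x ∈ Icc 1 n) (h1 : x ≠ 1) (h2 : x ≠ 2) :
    x ∈ Icc 3 n := by
  rw [mem_Icc] at hx ⊢
  omega

lemma linkedWC_iff_linkedWA_swap {s t : ℕ} (A B : Finset ℕ) (F : ℕ → ℕ) :
    ((∀ a ∈ A ∩ B, F a = a) ∧
        A.card = s ∧ B.card = s + t ∧ 1 ∉ A ∧ 2 ∉ A ∧ 1 ∈ B ∧ 2 ∉ B ∧ 1 ∉ A.image F) ↔
      ((∀ a ∈ A ∩ B.map (Equiv.swap 1 2).toEmbedding,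
          A.piecewise (Equiv.swap 1 2 ∘ F) id a = a) ∧
        A.card = s ∧ (B.map (Equiv.swap 1 2).toEmbedding).card = s + t ∧ 1 ∉ A ∧ 2 ∉ A ∧
        1 ∉ B.map (Equiv.swap 1 2).toEmbedding ∧ 2 ∈ B.map (Equiv.swap 1 2).toEmbedding ∧
        2 ∉ A.image (A.piecewise (Equiv.swap 1 2 ∘ F) id)) := by
  have hlinks : 1 ∉ A → 2 ∉ A → ((∀ a ∈ A ∩ B, F a = a) ↔
      ∀ a ∈ A ∩ B.map (Equiv.swap 1 2).toEmbedding,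
        A.piecewise (Equiv.swap 1 2 ∘ F) id a = a) := by
    intro h1 h2
    refine forall_congr' fun a => ?_
    by_cases ha : a ∈ A
    · have hfix := swap_one_two_apply_of_mem h1 h2 ha
      simp [ha, hfix, Equiv.swap_apply_eq_iff]
    · simp [ha]
  have himage : 2 ∈ A.image (A.piecewise (Equiv.swap 1 2 ∘ F) id) ↔ 1 ∈ A.image F := by
    simp only [mem_image]
    refine exists_congr fun a => and_congr_right fun ha => ?_
    rw [piecewise_eq_of_mem _ _ _ ha, Function.comp_apply, Equiv.swap_apply_eq_iff,
      Equiv.swap_apply_right]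
  by_cases h12 : 1 ∉ A ∧ 2 ∉ A
  · simp only [hlinks h12.1 h12.2, himage, card_map, mem_map_equiv, Equiv.symm_swap,
      Equiv.swap_apply_left, Equiv.swap_apply_right]
    tauto
  · tauto

lemma mlqW_map_swap (q : ℝ) {n : ℕ} {A B : Finset ℕ} {F : ℕ → ℕ}
    (hA : A ⊆ Icc 1 n) (hB : B ⊆ Icc 1 n) (hFB : ∀ a ∈ A, F a ∈ B)
    (h1A : 1 ∉ A) (h2A : 2 ∉ A) (h2B : 2 ∉ B) (h1F : 1 ∉ A.image F) :
    mlqW q n A (B.map (Equiv.swap 1 2).toEmbedding) (A.piecewise (Equiv.swap 1 2 ∘ F) id) =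
      mlqW q n A B F := by
  have hfix : ∀ a ∈ A, Equiv.swap 1 2 a = a := fun a => swap_one_two_apply_of_mem h1A h2A
  have hF1 : ∀ a ∈ A, F a ≠ 1 := fun a ha h => h1F (mem_image.2 ⟨a, ha, h⟩)
  have hF2 : ∀ a ∈ A, F a ≠ 2 := fun a ha => ne_of_mem_of_not_mem (hFB a ha) h2B
  have hrelink : ∀ a ∈ A, A.piecewise (Equiv.swap 1 2 ∘ F) id a = F a := fun a ha => by
    rw [piecewise_eq_of_mem _ _ _ ha, Function.comp_apply,
      Equiv.swap_apply_of_ne_of_ne (hF1 a ha) (hF2 a ha)]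
  have hfirst : A \ B.map (Equiv.swap 1 2).toEmbedding = A \ B := by
    ext a
    simp only [mem_sdiff, mem_map_equiv, Equiv.symm_swap]
    exact and_congr_right fun ha => by rw [hfix a ha]
  have hAfix : A.map (Equiv.swap 1 2).toEmbedding = A :=
    Finset.map_eq_of_subset fun x hx => by
      obtain ⟨a, ha, rfl⟩ := mem_map.1 hx
      rwa [Equiv.coe_toEmbedding, hfix a ha]
  have hsecond : B.map (Equiv.swap 1 2).toEmbedding \ A =
      (B \ A).map (Equiv.swap 1 2).toEmbedding := by
    rw [Finset.map_sdiff, hAfix]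
  have hsorted : ∀ a ∈ (A \ B).sort (· ≤ ·), a ∈ A := fun a ha =>
    (mem_sdiff.1 ((mem_sort _).1 ha)).1
  unfold mlqW
  rw [hfirst, hsecond, chainW_congr fun a ha => hrelink a (hsorted a ha),
    chainW_map_swap q fun a ha => ⟨mem_Icc_three_of_ne (hA (hsorted a ha))
        (ne_of_mem_of_not_mem (hsorted a ha) h1A) (ne_of_mem_of_not_mem (hsorted a ha) h2A),
      mem_Icc_three_of_ne (hB (hFB a (hsorted a ha))) (hF1 a (hsorted a ha))
        (hF2 a (hsorted a ha))⟩]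

theorem WC_eq_WA_general (q : ℝ) (s t n : ℕ) (hn : 2 ≤ n) :
    WC q s t n = WA q s t n := by
  refine mlqSum_eq_of_perm (Equiv.swap 1 2) (swap_one_two_mem_Icc_iff hn)
    linkedWC_iff_linkedWA_swap ?_
  rintro A B F hA hB hFB ⟨-, -, -, h1A, h2A, -, h2B, h1F⟩
  exact mlqW_map_swap q hA hB hFB h1A h2A h2B h1F

/-- `W^C_{s,t}(n) = W^A_{s,t}(n)`: interchanging the first two columns gives a
weight-preserving bijection between the linked multiline queues counted by `W^C`
and those counted by `W^A`. -/
theorem WC_eq_WA (q : ℝ) (hq0 : 0 ≤ q) (hq1 : q < 1)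
    (s t n : ℕ) (hn : 2 ≤ n) (hst : s + t ≤ n) :
    WC q s t n = WA q s t n :=
  WC_eq_WA_general q s t n hn
end

section
/- For all integers s ≥ 0, t ≥ 1 and n with 2s + t + 1 ≤ n, the following binomial identity (obtained in the evaluation of W^A) holds: Σ_{i=0}^{s} binom(n−2, i) · (t/(s−i+t)) · (n−i−2)! / ((s−i)! · (s−i+t−1)! · (n−1−2s−t+i)!) = t·(n−2)!·(n−1)! / (s!·(n−s−1)!·(s+t)!·(n−s−t−1)!). -/
open Finset Nat

lemma WA_vandermonde (s u m : ℕ) :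
    ∑ i ∈ Finset.range (s + 1), s.choose i * (s + u + m + 1).choose (s - i + u + 1)
      = (2 * s + u + m + 1).choose (s + u + 1) := by
  have h := Nat.add_choose_eq s (s + u + m + 1) (s + u + 1)
  rw [Finset.Nat.sum_antidiagonal_eq_sum_range_succ_mk] at h
  have h2 : ∑ i ∈ Finset.range (s + 1), s.choose i * (s + u + m + 1).choose (s + u + 1 - i)
      = ∑ i ∈ Finset.range (s + u + 1 + 1), s.choose i * (s + u + m + 1).choose (s + u + 1 - i) := by
    refine Finset.sum_subset (Finset.range_subset_range.mpr (by omega)) ?_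
    intro i hi hni
    have hs : s < i := by
      simp only [Finset.mem_range] at hi hni; omega
    simp [Nat.choose_eq_zero_of_lt hs]
  have h3 : ∑ i ∈ Finset.range (s + 1), s.choose i * (s + u + m + 1).choose (s - i + u + 1)
      = ∑ i ∈ Finset.range (s + 1), s.choose i * (s + u + m + 1).choose (s + u + 1 - i) := by
    refine Finset.sum_congr rfl fun i hi => ?_
    have hi' : i ≤ s := by
      have := Finset.mem_range.mp hi; omega
    have : s - i + u + 1 = s + u + 1 - i := by omega
    rw [this]
  rw [h3, h2, ← h]
  congr 1
  omega

lemma WA_term (u m i k : ℕ) :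
    ((2 * (i + k) + u + m).choose i : ℝ) * (((1 + u : ℕ) : ℝ) / ((k + u + 1 : ℕ) : ℝ))
        * (Nat.factorial (i + 2 * k + u + m) : ℝ)
        / ((Nat.factorial k : ℝ) * (Nat.factorial (k + u) : ℝ)
            * (Nat.factorial (i + m) : ℝ))
      = (((i + k).choose i * (i + k + u + m + 1).choose (k + u + 1) : ℕ) : ℝ)
        * (((1 + u : ℕ) : ℝ) * (Nat.factorial (2 * (i + k) + u + m) : ℝ)
          / ((Nat.factorial (i + k) : ℝ) * (Nat.factorial (i + k + u + m + 1) : ℝ))) := by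
  have hfac : ∀ a : ℕ, (Nat.factorial a : ℝ) ≠ 0 :=
    fun a => Nat.cast_ne_zero.2 (Nat.factorial_ne_zero a)
  rw [Nat.cast_mul, Nat.cast_choose ℝ (show i ≤ 2 * (i + k) + u + m by omega),
    Nat.cast_choose ℝ (show i ≤ i + k by omega),
    Nat.cast_choose ℝ (show k + u + 1 ≤ i + k + u + m + 1 by omega),
    show 2 * (i + k) + u + m - i = i + 2 * k + u + m from by omega,
    show i + k - i = k from by omega,
    show i + k + u + m + 1 - (k + u + 1) = i + m from by omega,
    Nat.factorial_succ (k + u)]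
  push_cast
  have hk1 : (k : ℝ) + u + 1 ≠ 0 := by positivity
  field_simp

/-- The binomial identity obtained in the evaluation of `W^A`:
`Σ_{i=0}^{s} C(n-2, i) · (t/(s-i+t)) · (n-i-2)! / ((s-i)! (s-i+t-1)! (n-1-2s-t+i)!)
  = t·(n-2)!·(n-1)! / (s!·(n-s-1)!·(s+t)!·(n-s-t-1)!)`. -/
theorem WA_binomial_identity (s t n : ℕ) (ht : 1 ≤ t) (hn : 2 * s + t + 1 ≤ n) :
    ∑ i ∈ Finset.range (s + 1),
      ((n - 2).choose i : ℝ) * ((t : ℝ) / ((s - i + t : ℕ) : ℝ))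
        * (Nat.factorial (n - i - 2) : ℝ)
        / ((Nat.factorial (s - i) : ℝ) * (Nat.factorial (s - i + t - 1) : ℝ)
            * (Nat.factorial (n - 1 - 2 * s - t + i) : ℝ)) =
      (t : ℝ) * (Nat.factorial (n - 2) : ℝ) * (Nat.factorial (n - 1) : ℝ)
        / ((Nat.factorial s : ℝ) * (Nat.factorial (n - s - 1) : ℝ)
            * (Nat.factorial (s + t) : ℝ) * (Nat.factorial (n - s - t - 1) : ℝ)) := by
  obtain ⟨u, rfl⟩ := Nat.exists_eq_add_of_le ht
  obtain ⟨m, rfl⟩ := Nat.exists_eq_add_of_le hn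
  have key : ∀ i ∈ Finset.range (s + 1),
      ((2 * s + (1 + u) + 1 + m - 2).choose i : ℝ)
          * (((1 + u : ℕ) : ℝ) / ((s - i + (1 + u) : ℕ) : ℝ))
          * (Nat.factorial (2 * s + (1 + u) + 1 + m - i - 2) : ℝ)
          / ((Nat.factorial (s - i) : ℝ) * (Nat.factorial (s - i + (1 + u) - 1) : ℝ)
              * (Nat.factorial (2 * s + (1 + u) + 1 + m - 1 - 2 * s - (1 + u) + i) : ℝ))
        = ((s.choose i * (s + u + m + 1).choose (s - i + u + 1) : ℕ) : ℝ)
          * (((1 + u : ℕ) : ℝ) * (Nat.factorial (2 * s + u + m) : ℝ)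
            / ((Nat.factorial s : ℝ) * (Nat.factorial (s + u + m + 1) : ℝ))) := by
    intro i hi
    have hi' : i ≤ s := by
      have := Finset.mem_range.mp hi; omega
    obtain ⟨k, rfl⟩ := Nat.exists_eq_add_of_le hi'
    rw [show 2 * (i + k) + (1 + u) + 1 + m - 2 = 2 * (i + k) + u + m from by omega,
      show i + k - i + (1 + u) = k + u + 1 from by omega,
      show 2 * (i + k) + (1 + u) + 1 + m - i - 2 = i + 2 * k + u + m from by omega,
      show i + k - i = k from by omega,
      show k + u + 1 - 1 = k + u from by omega,
      show 2 * (i + k) + (1 + u) + 1 + m - 1 - 2 * (i + k) - (1 + u) + i = i + m from by omega]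
    exact WA_term u m i k
  rw [Finset.sum_congr rfl key, ← Finset.sum_mul, ← Nat.cast_sum, WA_vandermonde s u m,
    show 2 * s + (1 + u) + 1 + m - 2 = 2 * s + u + m from by omega,
    show 2 * s + (1 + u) + 1 + m - 1 = 2 * s + u + m + 1 from by omega,
    show 2 * s + (1 + u) + 1 + m - s - 1 = s + u + m + 1 from by omega,
    show s + (1 + u) = s + u + 1 from by omega,
    show 2 * s + (1 + u) + 1 + m - s - (1 + u) - 1 = s + m from by omega,
    Nat.cast_choose ℝ (show s + u + 1 ≤ 2 * s + u + m + 1 by omega),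
    show 2 * s + u + m + 1 - (s + u + 1) = s + m from by omega]
  have hfac : ∀ a : ℕ, (Nat.factorial a : ℝ) ≠ 0 :=
    fun a => Nat.cast_ne_zero.2 (Nat.factorial_ne_zero a)
  push_cast
  field_simp
end
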